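/- arXiv:1209.3042 — 7 statements merged into one kernel-verified Lean document; each statement's English description precedes it below -/
import Mathlib

section
/- Let K be a compact Hausdorff space that is not an almost P-space, i.e., K has a nonempty Gδ subset with empty interior. Then there exists an injective bounded linear operator T : C(K) → C(K) whose range is not closed; in particular T is injective but not surjective and not an isomorphism onto its range. -/
/-! A point `p` of `G` lies in a zero set `Z ⊆ G` of some `φ ∈ C(K)`. Multiplication by `φ` is
injective because `Z` has empty interior, and not bounded below because `φ p = 0`; but an injective
operator between Banach spaces with closed range is bounded below. -/

open Set

theorem exists_continuous_eqOn_zero_preimage_zero_subset {X : Type*} [TopologicalSpace X]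
    [NormalSpace X] {s G : Set X} (hs : IsClosed s) (hG : IsGδ G) (hsG : s ⊆ G) :
    ∃ φ : C(X, ℝ), EqOn φ 0 s ∧ φ ⁻¹' {0} ⊆ G := by
  obtain ⟨U, hU_open, rfl⟩ := hG.eq_iInter_nat
  have hsU n : Disjoint s (U n)ᶜ :=
    disjoint_compl_right_iff_subset.2 (hsG.trans (iInter_subset U n))
  choose f hf_s hf_U hf_range using fun n =>
    exists_continuous_zero_one_of_isClosed hs (hU_open n).isClosed_compl (hsU n)
  have hterm_nonneg n x : 0 ≤ (1 / 2 : ℝ) ^ n * f n x := by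
    have := (hf_range n x).1
    positivity
  have hterm_le n x : ‖(1 / 2 : ℝ) ^ n * f n x‖ ≤ (1 / 2) ^ n := by
    rw [Real.norm_of_nonneg (hterm_nonneg n x)]
    exact mul_le_of_le_one_right (by positivity) (hf_range n x).2
  refine ⟨⟨fun x => ∑' n, (1 / 2 : ℝ) ^ n * f n x,
    continuous_tsum (fun n => by fun_prop) summable_geometric_two hterm_le⟩, ?_, ?_⟩
  · intro x hx
    simp [hf_s _ hx]
  · intro x hx
    refine mem_iInter.2 fun n => not_not.1 fun hxU => ?_
    have hsum : Summable fun n => (1 / 2 : ℝ) ^ n * f n x :=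
      summable_geometric_two.of_norm_bounded (fun n => hterm_le n x)
    have hterm_le_tsum := hsum.le_tsum n fun j _ => hterm_nonneg j x
    simp only [ContinuousMap.coe_mk, mem_preimage, mem_singleton_iff] at hx
    rw [hx, hf_U n hxU, Pi.one_apply, mul_one] at hterm_le_tsum
    exact hterm_le_tsum.not_gt (by positivity)

theorem ContinuousMap.mul_right_injective_of_dense_support {X R : Type*} [TopologicalSpace X]
    [TopologicalSpace R] [T2Space R] [MulZeroClass R] [IsLeftCancelMulZero R] [ContinuousMul R]
    {φ : C(X, R)} (hφ : Dense (Function.support φ)) : Function.Injective (φ * ·) := by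
  intro g h hgh
  refine DFunLike.coe_injective <| Continuous.ext_on hφ g.continuous h.continuous fun x hx => ?_
  exact mul_left_cancel₀ hx (congr($hgh x))

theorem ContinuousMap.not_exists_mul_norm_le_norm_mul_of_apply_eq_zero {K : Type*}
    [TopologicalSpace K] [CompactSpace K] [T2Space K] {φ : C(K, ℝ)} {p : K} (hp : φ p = 0) :
    ¬ ∃ c > (0 : ℝ), ∀ g : C(K, ℝ), c * ‖g‖ ≤ ‖φ * g‖ := by
  rintro ⟨c, hc, hle⟩
  have hdisj : Disjoint {x | c / 2 ≤ |φ x|} {p} := by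
    simp only [disjoint_singleton_right, mem_ofPred_eq, hp, abs_zero, not_le]
    positivity
  obtain ⟨g, hg_large, hg_p, hg_range⟩ := exists_continuous_zero_one_of_isClosed
    (isClosed_le continuous_const (continuous_abs.comp φ.continuous)) isClosed_singleton hdisj
  have hg_norm : 1 ≤ ‖g‖ := by simpa [hg_p rfl] using g.norm_coe_le_norm p
  have hφg_norm : ‖φ * g‖ ≤ c / 2 := by
    refine (ContinuousMap.norm_le _ (by positivity)).2 fun x => ?_
    rw [ContinuousMap.mul_apply, norm_mul, Real.norm_eq_abs, Real.norm_of_nonneg (hg_range x).1]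
    by_cases hx : c / 2 ≤ |φ x|
    · simp [hg_large hx]
      positivity
    · exact (mul_le_of_le_one_right (abs_nonneg _) (hg_range x).2).trans (not_le.1 hx).le
  nlinarith [hle g]

/-- If a compact Hausdorff space `K` is not an almost P-space (i.e. it has a nonempty
Gδ subset with empty interior), then there exists an injective bounded linear operator
on `C(K)` whose range is not closed; in particular it is not surjective and not an
isomorphism onto its range. -/
theorem exists_injective_nonclosed_range_of_not_almostPSpace
    (K : Type*) [TopologicalSpace K] [CompactSpace K] [T2Space K]
    (G : Set K) (hGδ : IsGδ G) (hne : G.Nonempty) (hint : interior G = ∅) :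
    ∃ T : C(K, ℝ) →L[ℝ] C(K, ℝ), Function.Injective T ∧
      ¬ IsClosed (Set.range T) ∧ ¬ Function.Surjective T ∧
      ¬ ∃ c > (0:ℝ), ∀ f : C(K, ℝ), c * ‖f‖ ≤ ‖T f‖ := by
  obtain ⟨p, hp⟩ := hne
  obtain ⟨φ, hφ_p, hφ_G⟩ := exists_continuous_eqOn_zero_preimage_zero_subset isClosed_singleton
    hGδ (singleton_subset_iff.2 hp)
  have hφ_dense : Dense (Function.support φ) :=
    interior_eq_empty_iff_dense_compl.1 (subset_empty_iff.1 (hint ▸ interior_mono hφ_G))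
  let T := ContinuousLinearMap.mul ℝ C(K, ℝ) φ
  have hT_inj : Function.Injective T := φ.mul_right_injective_of_dense_support hφ_dense
  have hT_unbounded : ¬ ∃ c > (0:ℝ), ∀ f : C(K, ℝ), c * ‖f‖ ≤ ‖T f‖ :=
    φ.not_exists_mul_norm_le_norm_mul_of_apply_eq_zero (hφ_p rfl)
  have hT_range : ¬ IsClosed (Set.range T) := fun h =>
    hT_unbounded (antilipschitzWith_iff_exists_mul_le_norm.1
      (T.antilipschitz_of_injective_of_isClosed_range hT_inj h))
  exact ⟨T, hT_inj, hT_range, fun h => hT_range (h.range_eq ▸ isClosed_univ), hT_unbounded⟩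
end

section
/- No infinite compact Hausdorff almost P-space satisfies the countable chain condition; that is, every infinite compact Hausdorff space in which every nonempty Gδ subset has nonempty interior admits an uncountable family of pairwise disjoint nonempty open subsets. -/
/-!
Let `I` be the set of isolated points. If `I` is uncountable, its singletons already form an
uncountable disjoint family of nonempty open sets. Otherwise `Iᶜ` is a Gδ set, nonempty because
an infinite compact space is not discrete, so its interior `V` is a nonempty open set without
isolated points. Inside `V` every nonempty closed Gδ set has nonempty interior, hence contains two
points and therefore two disjoint nonempty closed Gδ subsets. Iterating this gives a Cantor scheme
of closed Gδ sets; by compactness each of its `2^ℵ₀` branches meets in a nonempty Gδ set, and the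
interiors of these pairwise disjoint Gδ sets are the required family.
-/

open Set Function PiNat

def IsAlmostPSpace (X : Type*) [TopologicalSpace X] : Prop :=
  ∀ G : Set X, IsGδ G → G.Nonempty → (interior G).Nonempty

section ClosedGδ

variable {X : Type*} [TopologicalSpace X]

theorem exists_isClosed_isGδ_mem_subset [CompletelyRegularSpace X] {U : Set X} (hU : IsOpen U)
    {x : X} (hx : x ∈ U) : ∃ G, IsClosed G ∧ IsGδ G ∧ x ∈ G ∧ G ⊆ U := by
  obtain ⟨f, hf, hfx, hf1⟩ := CompletelyRegularSpace.completely_regular_isOpen x U hU hx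
  refine ⟨f ⁻¹' {0}, isClosed_singleton.preimage hf, isClosed_singleton.isGδ.preimage hf, hfx,
    fun y hy => ?_⟩
  by_contra hyU
  exact zero_ne_one ((hy : f y = 0).symm.trans (hf1 hyU))

theorem exists_disjoint_isClosed_isGδ_subset [CompletelyRegularSpace X] [T2Space X] {U : Set X}
    (hU : IsOpen U) {x y : X} (hx : x ∈ U) (hy : y ∈ U) (hxy : x ≠ y) :
    ∃ G₀ G₁, IsClosed G₀ ∧ IsGδ G₀ ∧ x ∈ G₀ ∧ G₀ ⊆ U ∧ IsClosed G₁ ∧ IsGδ G₁ ∧ y ∈ G₁ ∧ G₁ ⊆ U ∧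
      Disjoint G₀ G₁ := by
  obtain ⟨W₀, W₁, hW₀, hW₁, hxW, hyW, hW⟩ := t2_separation hxy
  obtain ⟨G₀, hG₀c, hG₀g, hxG, hG₀⟩ := exists_isClosed_isGδ_mem_subset (hW₀.inter hU) ⟨hxW, hx⟩
  obtain ⟨G₁, hG₁c, hG₁g, hyG, hG₁⟩ := exists_isClosed_isGδ_mem_subset (hW₁.inter hU) ⟨hyW, hy⟩
  exact ⟨G₀, G₁, hG₀c, hG₀g, hxG, hG₀.trans inter_subset_right, hG₁c, hG₁g, hyG,
    hG₁.trans inter_subset_right,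
    hW.mono (hG₀.trans inter_subset_left) (hG₁.trans inter_subset_left)⟩

end ClosedGδ

namespace CantorScheme

variable {α : Type*}

theorem exists_of_forall_exists_disjoint (P : Set α → Prop)
    (hsplit : ∀ F, P F → ∃ F₀ F₁, P F₀ ∧ P F₁ ∧ F₀ ⊆ F ∧ F₁ ⊆ F ∧ _root_.Disjoint F₀ F₁)
    {F : Set α} (hF : P F) :
    ∃ A : List Bool → Set α,
      (∀ l, P (A l)) ∧ CantorScheme.Antitone A ∧ CantorScheme.Disjoint A := by
  choose ch₀ ch₁ hch₀ hch₁ hsub₀ hsub₁ hdisj using hsplit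
  let A : List Bool → {F // P F} :=
    List.foldr (fun b G => if b then ⟨ch₁ G.1 G.2, hch₁ _ _⟩ else ⟨ch₀ G.1 G.2, hch₀ _ _⟩) ⟨F, hF⟩
  refine ⟨fun l => (A l).1, fun l => (A l).2, fun l b => ?_, fun l => ?_⟩
  · cases b
    exacts [hsub₀ _ (A l).2, hsub₁ _ (A l).2]
  · rintro (_ | _) (_ | _) hne
    exacts [absurd rfl hne, hdisj _ (A l).2, (hdisj _ (A l).2).symm, absurd rfl hne]

theorem Disjoint.disjoint_iInter_res {β : Type*} {A : List β → Set α}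
    (hA : CantorScheme.Disjoint A) {x y : ℕ → β} (hxy : x ≠ y) :
    _root_.Disjoint (⋂ n, A (res x n)) (⋂ n, A (res y n)) := by
  set n := firstDiff x y
  have hres : res x n = res y n := res_eq_res.2 fun _ hm => apply_eq_of_lt_firstDiff hm
  have hdisj := hA (res x n) (apply_firstDiff_ne hxy)
  rw [hres] at hdisj
  exact hdisj.mono (iInter_subset_of_subset (n + 1) (by rw [res_succ, hres]))
    (iInter_subset_of_subset (n + 1) subset_rfl)

end CantorScheme

section Compact

variable {X : Type*} [TopologicalSpace X] [CompactSpace X]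

theorem CantorScheme.nonempty_iInter_res {β : Type*} {A : List β → Set X}
    (hanti : CantorScheme.Antitone A) (hclosed : ∀ l, IsClosed (A l)) (hne : ∀ l, (A l).Nonempty)
    (x : ℕ → β) : (⋂ n, A (res x n)).Nonempty :=
  IsCompact.nonempty_iInter_of_sequence_nonempty_isCompact_isClosed _
    (fun n => hanti (res x n) (x n)) (fun _ => hne _) (hclosed _).isCompact (fun _ => hclosed _)

theorem exists_isOpen_nonempty_forall_not_isOpen_singleton [T1Space X] [Infinite X]
    (hP : IsAlmostPSpace X) (hI : {x : X | IsOpen {x}}.Countable) :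
    ∃ V : Set X, IsOpen V ∧ V.Nonempty ∧ ∀ x ∈ V, ¬IsOpen {x} := by
  have hne : {x : X | IsOpen {x}}ᶜ.Nonempty := by
    refine nonempty_compl.2 fun h => ?_
    have := discreteTopology_iff_isOpen_singleton.2 fun x => h.symm.subset (mem_univ x)
    exact Infinite.not_finite (finite_of_compact_of_discrete (X := X))
  exact ⟨_, isOpen_interior, hP _ hI.isGδ_compl hne, fun x hx => interior_subset hx⟩

theorem exists_pairwise_disjoint_isOpen_of_forall_not_isOpen_singleton [T2Space X]
    (hP : IsAlmostPSpace X) {V : Set X} (hV : IsOpen V) (hVne : V.Nonempty)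
    (hVperf : ∀ x ∈ V, ¬IsOpen {x}) :
    ∃ f : (ℕ → Bool) → Set X, (∀ i, IsOpen (f i) ∧ (f i).Nonempty) ∧ Pairwise (Disjoint on f) := by
  let P : Set X → Prop := fun F => IsClosed F ∧ IsGδ F ∧ F.Nonempty ∧ F ⊆ V
  have hsplit : ∀ F, P F → ∃ F₀ F₁, P F₀ ∧ P F₁ ∧ F₀ ⊆ F ∧ F₁ ⊆ F ∧ Disjoint F₀ F₁ := by
    rintro F ⟨-, hFg, hFne, hFV⟩
    obtain ⟨x, hx⟩ := hP F hFg hFne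
    have hxV := hFV (interior_subset hx)
    obtain ⟨y, hy, hyx⟩ : ∃ y ∈ interior F, y ≠ x := by
      by_contra! h
      exact hVperf x hxV (eq_singleton_iff_unique_mem.2 ⟨hx, h⟩ ▸ isOpen_interior)
    obtain ⟨G₀, G₁, hG₀c, hG₀g, hxG, hG₀, hG₁c, hG₁g, hyG, hG₁, hG⟩ :=
      exists_disjoint_isClosed_isGδ_subset isOpen_interior hx hy hyx.symm
    exact ⟨G₀, G₁, ⟨hG₀c, hG₀g, ⟨x, hxG⟩, hG₀.trans (interior_subset.trans hFV)⟩,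
      ⟨hG₁c, hG₁g, ⟨y, hyG⟩, hG₁.trans (interior_subset.trans hFV)⟩,
      hG₀.trans interior_subset, hG₁.trans interior_subset, hG⟩
  obtain ⟨v, hv⟩ := hVne
  obtain ⟨G, hGc, hGg, hvG, hGV⟩ := exists_isClosed_isGδ_mem_subset hV hv
  obtain ⟨A, hA, hanti, hdisj⟩ :=
    CantorScheme.exists_of_forall_exists_disjoint P hsplit ⟨hGc, hGg, ⟨v, hvG⟩, hGV⟩
  refine ⟨fun x => interior (⋂ n, A (res x n)), fun x => ⟨isOpen_interior, ?_⟩,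
    fun x y hxy => (hdisj.disjoint_iInter_res hxy).mono interior_subset interior_subset⟩
  exact hP _ (.iInter fun n => (hA _).2.1)
    (CantorScheme.nonempty_iInter_res hanti (fun l => (hA l).1) (fun l => (hA l).2.2.1) x)

end Compact

theorem exists_not_countable_pairwise_disjoint_of_uncountable {X ι : Type*} [TopologicalSpace X]
    [Uncountable ι] {f : ι → Set X} (hf : ∀ i, IsOpen (f i) ∧ (f i).Nonempty) (hd : Pairwise (Disjoint on f)) :
    ∃ 𝒰 : Set (Set X), (∀ U ∈ 𝒰, IsOpen U ∧ U.Nonempty) ∧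
      (∀ U ∈ 𝒰, ∀ V ∈ 𝒰, U ≠ V → Disjoint U V) ∧ ¬ 𝒰.Countable := by
  have hinj : Injective f :=
    injective_iff_pairwise_ne.2 (hd.mono fun i _ h => h.ne (hf i).2.ne_empty)
  refine ⟨range f, forall_mem_range.2 hf, ?_, fun hc => not_countable_univ (α := ι) ?_⟩
  · rintro _ ⟨i, rfl⟩ _ ⟨j, rfl⟩ hne
    exact hd fun hij => hne (congrArg f hij)
  · exact (mapsTo_range f univ).countable_of_injOn hinj.injOn hc

/-- No infinite compact Hausdorff almost P-space satisfies the countable chain condition: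
every infinite compact Hausdorff space in which every nonempty Gδ set has nonempty interior
admits an uncountable pairwise disjoint family of nonempty open sets. -/
theorem not_ccc_of_infinite_compact_almostPSpace
    (K : Type*) [TopologicalSpace K] [CompactSpace K] [T2Space K] [Infinite K]
    (hP : ∀ G : Set K, IsGδ G → G.Nonempty → (interior G).Nonempty) :
    ∃ 𝒰 : Set (Set K), (∀ U ∈ 𝒰, IsOpen U ∧ U.Nonempty) ∧
      (∀ U ∈ 𝒰, ∀ V ∈ 𝒰, U ≠ V → Disjoint U V) ∧ ¬ 𝒰.Countable := by
  by_cases hI : {x : K | IsOpen {x}}.Countable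
  · obtain ⟨V, hV, hVne, hVperf⟩ := exists_isOpen_nonempty_forall_not_isOpen_singleton hP hI
    obtain ⟨f, hf, hd⟩ :=
      exists_pairwise_disjoint_isOpen_of_forall_not_isOpen_singleton hP hV hVne hVperf
    have : Uncountable (ℕ → Bool) :=
      Cardinal.aleph0_lt_mk_iff.1 (by simpa using Cardinal.cantor Cardinal.aleph0)
    exact exists_not_countable_pairwise_disjoint_of_uncountable hf hd
  · have : Uncountable {x : K | IsOpen {x}} := not_countable_iff.1 fun h => hI h.to_set
    exact exists_not_countable_pairwise_disjoint_of_uncountable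
      (f := fun x : {x : K | IsOpen {x}} => {x.1})
      (fun x => ⟨x.2, singleton_nonempty _⟩)
      (fun x y hxy => disjoint_singleton.2 fun h => hxy (Subtype.ext h))
end

section
/- Let K be a compact Hausdorff space that does not satisfy the countable chain condition, i.e., K admits an uncountable family of pairwise disjoint nonempty open subsets. Then no weakly compact bounded linear operator T : C(K) → C(K) is injective. -/
/-!
An injective `T` sends bump functions `f_U` of the members `U` of an uncountable disjoint family
to nonzero functions, so some `ε > 0` bounds `‖T f_U‖` from below for infinitely many `U`. This
contradicts the fact that a weakly compact operator on `C(K)` sends every sequence `fₙ` of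
disjointly supported functions with `‖fₙ‖ ≤ 1` to a norm-null sequence.

For the latter, all the sums `∑ₖ dₖ fₖ` with `|dₖ| ≤ 1` lie in the unit ball, so
`∑ₖ |T fₖ y| ≤ ‖T‖` at every point `y`, and weak compactness makes the pointwise sum of every
subseries `∑_{k ∈ B} T fₖ` continuous: it is a weak cluster point of the partial sums. If
`|T fₙ xₙ| ≥ ε` for all `n`, Rosenthal's lemma yields an infinite `A` on which the off-diagonal
mass `∑_{k ∈ A, k ≠ j} |T fₖ xⱼ|` is at most `ε / 3`. At a cluster point `z` of `(xⱼ)_{j ∈ A}`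
the subseries over `A` minus a suitable finite set is at most `ε / 3` in absolute value, while at
the points `xⱼ` it is at least `2ε / 3`: it cannot be continuous at `z`.
-/

open Filter Topology Function

/-- A bounded linear operator between real normed spaces is weakly compact if the image of
the closed unit ball is relatively compact in the weak topology. -/
def IsWeaklyCompactOperator {E F : Type*} [NormedAddCommGroup E] [NormedSpace ℝ E]
    [NormedAddCommGroup F] [NormedSpace ℝ F] (T : E →L[ℝ] F) : Prop :=
  IsCompact (closure (toWeakSpace ℝ F '' (T '' Metric.closedBall 0 1)))

section Rosenthal

variable (a : ℕ → ℕ → ℝ) (ε : ℝ)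

/-- Split `B` into infinitely many infinite blocks and choose in each block a row carrying mass
`> ε` on the rest of its own block. -/
lemma exists_infinite_subset_forall_sum_gt
    (h : ∀ A : Set ℕ, A.Infinite → ∃ j ∈ A, ∃ F : Finset ℕ, ↑F ⊆ A \ {j} ∧ ε < ∑ k ∈ F, a j k)
    {B : Set ℕ} (hB : B.Infinite) :
    ∃ B' ⊆ B, B'.Infinite ∧ ∀ j ∈ B', ∃ F : Finset ℕ, ↑F ⊆ B \ B' ∧ ε < ∑ k ∈ F, a j k := by
  let e : ℕ × ℕ → ℕ := fun p => hB.natEmbedding B (Nat.pairEquiv p)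
  have he : Injective e :=
    Subtype.val_injective.comp ((hB.natEmbedding B).injective.comp Nat.pairEquiv.injective)
  have he_mem : ∀ p, e p ∈ B := fun p => (hB.natEmbedding B _).2
  let block : ℕ → Set ℕ := fun i => Set.range fun m => e (i, m)
  have block_eq : ∀ {i i' n}, n ∈ block i → n ∈ block i' → i = i' := by
    rintro i i' _ ⟨m, rfl⟩ ⟨m', hm'⟩
    exact (congrArg Prod.fst (he hm')).symm
  choose j hj F hF hFsum using fun i =>
    h (block i) (Set.infinite_range_of_injective (he.comp (Prod.mk_right_injective i)))
  refine ⟨Set.range j, ?_, Set.infinite_range_of_injective fun i i' hii =>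
    block_eq (hj i) (hii ▸ hj i'), ?_⟩
  · rintro _ ⟨i, rfl⟩
    obtain ⟨m, hm⟩ := hj i
    exact hm ▸ he_mem _
  · rintro _ ⟨i, rfl⟩
    refine ⟨F i, fun k hk => ?_, hFsum i⟩
    obtain ⟨⟨m, rfl⟩, hne⟩ := hF i hk
    refine ⟨he_mem _, ?_⟩
    rintro ⟨i', hi'⟩
    obtain rfl : i' = i := block_eq (hj i') (hi' ▸ ⟨m, rfl⟩)
    exact hne hi'.symm

/-- Rosenthal's lemma. -/
theorem exists_infinite_forall_sum_le (hε : 0 < ε) {M : ℝ}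
    (hM : ∀ j (F : Finset ℕ), ∑ k ∈ F, a j k ≤ M) :
    ∃ A : Set ℕ, A.Infinite ∧ ∀ j ∈ A, ∀ F : Finset ℕ, ↑F ⊆ A \ {j} → ∑ k ∈ F, a j k ≤ ε := by
  by_contra! h
  have mass : ∀ r : ℕ, ∃ B : Set ℕ, B.Infinite ∧
      ∀ j ∈ B, ∃ F : Finset ℕ, Disjoint (F : Set ℕ) B ∧ r * ε ≤ ∑ k ∈ F, a j k := by
    intro r
    induction r with
    | zero => exact ⟨Set.univ, Set.infinite_univ, fun j _ => ⟨∅, by simp, by simp⟩⟩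
    | succ r ih =>
      obtain ⟨B, hB, hβ⟩ := ih
      choose! β hβB hβsum using hβ
      obtain ⟨B', hB'B, hB', hF⟩ := exists_infinite_subset_forall_sum_gt a ε h hB
      refine ⟨B', hB', fun j hj => ?_⟩
      obtain ⟨F, hFB, hFsum⟩ := hF j hj
      have hβF : Disjoint (β j) F := by
        rw [← Finset.disjoint_coe]
        exact (hβB j (hB'B hj)).mono_right fun k hk => (hFB hk).1
      refine ⟨β j ∪ F, ?_, ?_⟩
      · rw [Finset.coe_union, Set.disjoint_union_left]
        exact ⟨(hβB j (hB'B hj)).mono_right hB'B, Set.disjoint_sdiff_left.mono_left hFB⟩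
      · rw [Finset.sum_union hβF]
        push_cast
        linarith [hβsum j (hB'B hj)]
  obtain ⟨r, hr⟩ := exists_nat_gt (M / ε)
  obtain ⟨B, hB, hF⟩ := mass r
  obtain ⟨j, hj⟩ := hB.nonempty
  obtain ⟨F, -, hFsum⟩ := hF j hj
  linarith [hM j F, (div_lt_iff₀ hε).1 hr]

end Rosenthal

section IndicatorSeries

variable {ι : Type*} {B : Set ι} {a : ι → ℝ} {S δ : ℝ}

lemma Finset.sum_indicator_one_mul (B : Set ι) [DecidablePred (· ∈ B)] (a : ι → ℝ)
    (t : Finset ι) : ∑ k ∈ t, B.indicator 1 k * a k = ∑ k ∈ t with k ∈ B, a k := by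
  simp [Finset.sum_filter, Set.indicator_apply, ite_mul]

lemma abs_le_of_hasSum_indicator_one_mul (hS : HasSum (fun k => B.indicator 1 k * a k) S)
    (hδ : ∀ F : Finset ι, ↑F ⊆ B → |∑ k ∈ F, a k| ≤ δ) : |S| ≤ δ := by
  classical
  refine (isClosed_le continuous_abs continuous_const).mem_of_tendsto hS
    (Eventually.of_forall fun t => ?_)
  rw [Set.mem_ofPred_eq, Finset.sum_indicator_one_mul]
  exact hδ _ fun k hk => (Finset.mem_filter.1 hk).2

lemma sub_le_abs_of_hasSum_indicator_one_mul (hS : HasSum (fun k => B.indicator 1 k * a k) S)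
    {j : ι} (hj : j ∈ B) (hδ : ∀ F : Finset ι, ↑F ⊆ B \ {j} → ∑ k ∈ F, |a k| ≤ δ) :
    |a j| - δ ≤ |S| := by
  classical
  refine (isClosed_le continuous_const continuous_abs).mem_of_tendsto hS
    ((eventually_ge_atTop {j}).mono fun t ht => ?_)
  have hjt : j ∈ t.filter (· ∈ B) := Finset.mem_filter.2 ⟨ht (Finset.mem_singleton_self j), hj⟩
  rw [Set.mem_ofPred_eq, Finset.sum_indicator_one_mul, ← Finset.add_sum_erase _ _ hjt]
  have hrest := (Finset.abs_sum_le_sum_abs a _).trans (hδ ((t.filter (· ∈ B)).erase j) fun k hk =>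
    ⟨(Finset.mem_filter.1 (Finset.mem_of_mem_erase hk)).2, Finset.ne_of_mem_erase hk⟩)
  linarith [abs_sub_abs_le_abs_add (a j) (∑ k ∈ (t.filter (· ∈ B)).erase j, a k)]

end IndicatorSeries

namespace ContinuousMap

variable {K : Type*} [TopologicalSpace K]

theorem exists_ne_zero_support_subset [CompactSpace K] [T2Space K] {U : Set K} (hU : IsOpen U)
    (hne : U.Nonempty) :
    ∃ f : C(K, ℝ), f ≠ 0 ∧ support f ⊆ U ∧ ‖f‖ ≤ 1 := by
  obtain ⟨p, hp⟩ := hne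
  obtain ⟨f, hf1, hf0, -, hf01⟩ := exists_continuous_one_zero_of_isCompact isCompact_singleton
    hU.isClosed_compl (Set.disjoint_singleton_left.2 (not_not.2 hp))
  refine ⟨f, fun h => by simpa [h] using hf1 rfl, fun y hy => by_contra fun hyU => hy (hf0 hyU),
    (norm_le _ zero_le_one).2 fun y => ?_⟩
  rw [Real.norm_eq_abs, abs_le]
  exact ⟨by linarith [(hf01 y).1], (hf01 y).2⟩

theorem norm_sum_smul_le_one [CompactSpace K] {ι : Type*} {f : ι → C(K, ℝ)}
    (hdisj : Pairwise (Disjoint on fun i => support (f i))) (hf : ∀ i, ‖f i‖ ≤ 1)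
    {d : ι → ℝ} (hd : ∀ i, |d i| ≤ 1) (F : Finset ι) : ‖∑ i ∈ F, d i • f i‖ ≤ 1 := by
  refine (norm_le _ zero_le_one).2 fun y => ?_
  rw [sum_apply]
  by_cases hy : ∃ i ∈ F, f i y ≠ 0
  · obtain ⟨i, hiF, hi⟩ := hy
    rw [Finset.sum_eq_single_of_mem i hiF fun k _ hki => by
      rw [smul_apply, notMem_support.1 (Set.disjoint_right.1 (hdisj hki) hi), smul_zero]]
    calc ‖d i • f i y‖ = |d i| * ‖f i y‖ := by rw [norm_smul, Real.norm_eq_abs]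
      _ ≤ 1 * 1 :=
        mul_le_mul (hd i) ((norm_coe_le_norm _ y).trans (hf i)) (norm_nonneg _) zero_le_one
      _ = 1 := one_mul 1
  · push Not at hy
    rw [Finset.sum_eq_zero fun i hi => by rw [smul_apply, hy i hi, smul_zero], norm_zero]
    exact zero_le_one

theorem continuous_of_tendsto_of_isCompact_closure_toWeakSpace {S : Set C(K, ℝ)}
    (hS : IsCompact (closure (toWeakSpace ℝ C(K, ℝ) '' S))) {s : ℕ → C(K, ℝ)} (hs : ∀ n, s n ∈ S)
    {φ : K → ℝ} (hφ : ∀ y, Tendsto (fun n => s n y) atTop (𝓝 (φ y))) : Continuous φ := by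
  obtain ⟨w, -, hw⟩ := hS.exists_mapClusterPt (f := atTop) (u := fun n => toWeakSpace ℝ _ (s n))
    (tendsto_principal.2 (Eventually.of_forall fun n => subset_closure ⟨s n, hs n, rfl⟩))
  suffices φ = (toWeakSpace ℝ C(K, ℝ)).symm w from this ▸ map_continuous _
  funext y
  have hev : Continuous fun v : WeakSpace ℝ C(K, ℝ) => evalCLM ℝ y ((toWeakSpace ℝ _).symm v) :=
    WeakBilin.eval_continuous (topDualPairing ℝ C(K, ℝ)).flip (evalCLM ℝ y)
  exact (eq_of_nhds_neBot ((hw.continuousAt_comp hev.continuousAt).clusterPt.mono (hφ y))).symm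

end ContinuousMap

section WeaklyCompact

variable {K : Type*} [TopologicalSpace K] [CompactSpace K] {T : C(K, ℝ) →L[ℝ] C(K, ℝ)}
  {f : ℕ → C(K, ℝ)}

lemma sum_smul_apply_mem_image_closedBall (hdisj : Pairwise (Disjoint on fun n => support (f n)))
    (hf : ∀ n, ‖f n‖ ≤ 1) {d : ℕ → ℝ} (hd : ∀ n, |d n| ≤ 1) (F : Finset ℕ) :
    ∑ k ∈ F, d k • T (f k) ∈ T '' Metric.closedBall 0 1 :=
  ⟨∑ k ∈ F, d k • f k, mem_closedBall_zero_iff.2 (ContinuousMap.norm_sum_smul_le_one hdisj hf hd F),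
    by simp [map_sum]⟩

lemma sum_abs_apply_le_opNorm (hdisj : Pairwise (Disjoint on fun n => support (f n)))
    (hf : ∀ n, ‖f n‖ ≤ 1) (y : K) (F : Finset ℕ) : ∑ k ∈ F, |T (f k) y| ≤ ‖T‖ := by
  obtain ⟨u, hu, hTu⟩ := sum_smul_apply_mem_image_closedBall (T := T) hdisj hf
    (d := fun k => SignType.sign (T (f k) y))
    (fun k => by cases SignType.sign (T (f k) y) <;> simp) F
  calc ∑ k ∈ F, |T (f k) y| = (∑ k ∈ F, (SignType.sign (T (f k) y) : ℝ) • T (f k)) y := by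
        simp [ContinuousMap.sum_apply, sign_mul_self]
    _ ≤ ‖T u‖ := hTu ▸ (le_abs_self _).trans
        ((Real.norm_eq_abs _).symm.trans_le (ContinuousMap.norm_coe_le_norm _ y))
    _ ≤ ‖T‖ := by simpa using T.le_opNorm_of_le (mem_closedBall_zero_iff.1 hu)

lemma summable_abs_apply (hdisj : Pairwise (Disjoint on fun n => support (f n)))
    (hf : ∀ n, ‖f n‖ ≤ 1) (y : K) : Summable fun k => |T (f k) y| :=
  summable_of_sum_range_le (fun _ => abs_nonneg _) fun _ => sum_abs_apply_le_opNorm hdisj hf y _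

theorem IsWeaklyCompactOperator.exists_hasSum_mul_apply (hT : IsWeaklyCompactOperator T)
    (hdisj : Pairwise (Disjoint on fun n => support (f n))) (hf : ∀ n, ‖f n‖ ≤ 1) {d : ℕ → ℝ}
    (hd : ∀ n, |d n| ≤ 1) : ∃ h : C(K, ℝ), ∀ y, HasSum (fun k => d k * T (f k) y) (h y) := by
  have hsum : ∀ y, Summable fun k => d k * T (f k) y := fun y =>
    (summable_abs_apply hdisj hf y).of_norm_bounded fun k => by
      rw [Real.norm_eq_abs, abs_mul]
      exact mul_le_of_le_one_left (abs_nonneg _) (hd k)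
  refine ⟨⟨fun y => ∑' k, d k * T (f k) y,
    ContinuousMap.continuous_of_tendsto_of_isCompact_closure_toWeakSpace hT
      (fun n => sum_smul_apply_mem_image_closedBall hdisj hf hd (Finset.range n))
      fun y => by simpa [ContinuousMap.sum_apply] using (hsum y).hasSum.tendsto_sum_nat⟩,
    fun y => (hsum y).hasSum⟩

theorem IsWeaklyCompactOperator.exists_norm_apply_lt (hT : IsWeaklyCompactOperator T)
    (hdisj : Pairwise (Disjoint on fun n => support (f n))) (hf : ∀ n, ‖f n‖ ≤ 1) {ε : ℝ}
    (hε : 0 < ε) : ∃ n, ‖T (f n)‖ < ε := by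
  by_contra! hlarge
  have hx : ∀ n, ∃ x, ε ≤ |T (f n) x| := fun n => by
    by_contra! h
    exact (hlarge n).not_gt (((T (f n)).norm_lt_iff hε).2 h)
  choose x hx using hx
  obtain ⟨A, hA, hAsum⟩ := exists_infinite_forall_sum_le (fun j k => |T (f k) (x j)|) (ε / 3)
    (by positivity) fun j F => sum_abs_apply_le_opNorm hdisj hf (x j) F
  have : (𝓟 A ⊓ cofinite).NeBot := inf_comm (𝓟 A) cofinite ▸ cofinite_inf_principal_neBot_iff.2 hA
  obtain ⟨z, -, hz⟩ := isCompact_univ.exists_mapClusterPt (f := 𝓟 A ⊓ cofinite) (u := x) (by simp)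
  obtain ⟨s, hs⟩ := (summable_abs_apply (T := T) hdisj hf z).of_abs.vanishing
    (Metric.closedBall_mem_nhds (0 : ℝ) (by positivity : 0 < ε / 3))
  obtain ⟨h, hh⟩ := hT.exists_hasSum_mul_apply hdisj hf (d := (A \ s).indicator 1)
    fun k => by by_cases hk : k ∈ A \ ↑s <;> simp [hk]
  have hz_le : |h z| ≤ ε / 3 := abs_le_of_hasSum_indicator_one_mul (hh z) fun F hF => by
    simpa using hs F (Finset.disjoint_left.2 fun k hk => (hF hk).2)
  have hx_ge : ∀ j ∈ A \ s, 2 * ε / 3 ≤ |h (x j)| := fun j hj => by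
    have := sub_le_abs_of_hasSum_indicator_one_mul (hh (x j)) hj fun F hF =>
      hAsum j hj.1 F (hF.trans (Set.sdiff_subset_sdiff_left Set.sdiff_subset))
    linarith [hx j]
  have hnear : ∀ᶠ y in 𝓝 z, |h y| < 2 * ε / 3 :=
    h.continuous.abs.continuousAt.eventually_lt continuousAt_const (by linarith)
  obtain ⟨j, hj_near, hj⟩ := ((hz.frequently hnear).and_eventually
    (inter_mem_inf (mem_principal_self A) s.eventually_cofinite_notMem)).exists
  exact (hx_ge j hj).not_gt hj_near

theorem IsWeaklyCompactOperator.tendsto_norm_apply (hT : IsWeaklyCompactOperator T)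
    (hdisj : Pairwise (Disjoint on fun n => support (f n))) (hf : ∀ n, ‖f n‖ ≤ 1) :
    Tendsto (fun n => ‖T (f n)‖) atTop (𝓝 0) := by
  refine Metric.tendsto_nhds.2 fun ε hε => ?_
  by_contra h
  simp only [dist_zero_right, norm_norm, not_eventually, not_lt] at h
  obtain ⟨φ, hφ, hφε⟩ := extraction_of_frequently_atTop h
  obtain ⟨n, hn⟩ := hT.exists_norm_apply_lt (hdisj.comp_of_injective hφ.injective)
    (fun n => hf (φ n)) hε
  exact (hφε n).not_gt hn

end WeaklyCompact

theorem Set.exists_pos_infinite_setOf_le_of_not_countable {α : Type*} {s : Set α}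
    (hs : ¬ s.Countable) {g : α → ℝ} (hg : ∀ a ∈ s, 0 < g a) :
    ∃ ε > 0, {a ∈ s | ε ≤ g a}.Infinite := by
  by_contra! h
  refine hs ((Set.countable_iUnion fun n : ℕ => (h (1 / (n + 1)) (by positivity)).countable).mono
    fun a ha => Set.mem_iUnion.2 ?_)
  obtain ⟨n, hn⟩ := exists_nat_one_div_lt (hg a ha)
  exact ⟨n, ha, hn.le⟩

/-- If a compact Hausdorff space `K` fails the countable chain condition (it has an
uncountable pairwise disjoint family of nonempty open sets), then no weakly compact
operator on `C(K)` is injective. -/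
theorem not_injective_of_weaklyCompact_of_not_ccc
    (K : Type*) [TopologicalSpace K] [CompactSpace K] [T2Space K]
    (𝒰 : Set (Set K)) (hopen : ∀ U ∈ 𝒰, IsOpen U ∧ U.Nonempty)
    (hdisj : ∀ U ∈ 𝒰, ∀ V ∈ 𝒰, U ≠ V → Disjoint U V) (hunc : ¬ 𝒰.Countable)
    (T : C(K, ℝ) →L[ℝ] C(K, ℝ)) (hT : IsWeaklyCompactOperator T) :
    ¬ Function.Injective T := by
  intro hinj
  choose! b hb0 hbU hb1 using fun U hU =>
    ContinuousMap.exists_ne_zero_support_subset (hopen U hU).1 (hopen U hU).2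
  obtain ⟨ε, hε, hS⟩ := Set.exists_pos_infinite_setOf_le_of_not_countable hunc
    (g := fun U => ‖T (b U)‖) fun U hU =>
      norm_pos_iff.2 fun h => hb0 U hU (hinj (h.trans (map_zero T).symm))
  let V := hS.natEmbedding _
  have hV : ∀ n, (V n : Set K) ∈ 𝒰 := fun n => (V n).2.1
  have hdisjV : Pairwise (Disjoint on fun n => support (b (V n))) := fun m n hmn =>
    (hdisj _ (hV m) _ (hV n) fun h => hmn (V.injective (Subtype.ext h))).mono
      (hbU _ (hV m)) (hbU _ (hV n))
  obtain ⟨n, hn⟩ :=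
    ((hT.tendsto_norm_apply hdisjV fun n => hb1 _ (hV n)).eventually (gt_mem_nhds hε)).exists
  exact (V n).2.2.not_gt hn
end

section
/- Let K be a compact Hausdorff almost P-space and let g ∈ C(K). The multiplication operator T_g : C(K) → C(K), defined by T_g(f) = g·f, is an isomorphism onto its range (i.e., is bounded below: there exists c > 0 with ‖g·f‖ ≥ c‖f‖ for all f ∈ C(K)) if and only if T_g is injective. -/
/-- For a compact Hausdorff almost P-space `K` and `g ∈ C(K)`, the multiplication operator
`f ↦ g * f` on `C(K)` is an isomorphism onto its range (bounded below) if and only if it is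
injective. -/
theorem mul_operator_boundedBelow_iff_injective
    (K : Type*) [TopologicalSpace K] [CompactSpace K] [T2Space K]
    (hP : ∀ G : Set K, IsGδ G → G.Nonempty → (interior G).Nonempty)
    (g : C(K, ℝ)) :
    (∃ c > (0:ℝ), ∀ f : C(K, ℝ), c * ‖f‖ ≤ ‖g * f‖) ↔
      Function.Injective (fun f : C(K, ℝ) => g * f) := by
  constructor
  · rintro ⟨c, hc, h⟩ f₁ f₂ hf
    have h0 : g * (f₁ - f₂) = 0 := by
      simp only at hf
      rw [mul_sub, hf, sub_self]
    have := h (f₁ - f₂)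
    rw [h0, norm_zero] at this
    have : ‖f₁ - f₂‖ ≤ 0 := by nlinarith
    have : f₁ - f₂ = 0 := by
      rw [← norm_le_zero_iff]; exact this
    exact sub_eq_zero.mp this
  · intro hinj
    -- zero set of g is empty
    have hZ : ∀ x : K, g x ≠ 0 := by
      intro x₀ hx₀
      -- zero set is nonempty Gδ
      have hGδ : IsGδ (g ⁻¹' {0}) := by
        have heq : g ⁻¹' {0} = ⋂ n : ℕ, {x | |g x| < 1 / (n + 1)} := by
          ext y
          simp only [Set.mem_preimage, Set.mem_singleton_iff, Set.mem_iInter, Set.mem_setOf_eq]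
          constructor
          · intro hy n; simp [hy]; positivity
          · intro hy
            by_contra hne
            obtain ⟨n, hn⟩ := exists_nat_one_div_lt (abs_pos.mpr hne)
            exact absurd (hy n) (not_lt.mpr hn.le)
        rw [heq]
        exact .iInter_of_isOpen fun n =>
          isOpen_lt (continuous_abs.comp g.continuous) continuous_const
      obtain ⟨x, hx⟩ := hP _ hGδ ⟨x₀, hx₀⟩
      -- U := interior, open, x ∈ U ⊆ zero set
      have hU : IsOpen (interior (g ⁻¹' {0})) := isOpen_interior
      have hdisj : Disjoint ((interior (g ⁻¹' {0}))ᶜ : Set K) {x} := by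
        simp [Set.disjoint_singleton_right, hx]
      obtain ⟨f, hf0, hf1, -⟩ :=
        exists_continuous_zero_one_of_isClosed hU.isClosed_compl isClosed_singleton hdisj
      have hgf : g * f = 0 := by
        ext y
        by_cases hy : y ∈ interior (g ⁻¹' {0})
        · have : g y = 0 := by have := interior_subset hy; simpa using this
          simp [this]
        · have : f y = 0 := hf0 hy
          simp [this]
      have := hinj (a₁ := f) (a₂ := 0) (by simpa using hgf)
      have hx1 : f x = 1 := hf1 rfl
      rw [this] at hx1
      simp at hx1
    cases isEmpty_or_nonempty K with
    | inl h =>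
      refine ⟨1, one_pos, fun f => ?_⟩
      have : f = 0 := by ext x; exact h.elim x
      have h2 : g * f = 0 := by ext x; exact h.elim x
      simp [this, h2]
    | inr h =>
      obtain ⟨x₀, -, hx₀⟩ := isCompact_univ.exists_isMinOn Set.univ_nonempty
        (continuous_abs.comp g.continuous).continuousOn
      set c := |g x₀| with hcdef
      have hc : 0 < c := abs_pos.mpr (hZ x₀)
      refine ⟨c, hc, fun f => ?_⟩
      have hb : ∀ x : K, c * |f x| ≤ ‖g * f‖ := by
        intro x
        have h1 : c ≤ |g x| := hx₀ (Set.mem_univ x)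
        calc c * |f x| ≤ |g x| * |f x| :=
              mul_le_mul_of_nonneg_right h1 (abs_nonneg _)
          _ = |(g * f) x| := by simp [abs_mul]
          _ ≤ ‖g * f‖ := (g * f).norm_coe_le_norm x
      have : ‖f‖ ≤ c⁻¹ * ‖g * f‖ := by
        apply ContinuousMap.norm_le _ (by positivity) |>.mpr
        intro x
        rw [le_inv_mul_iff₀ hc]
        simpa using hb x
      calc c * ‖f‖ ≤ c * (c⁻¹ * ‖g * f‖) := by nlinarith
        _ = ‖g * f‖ := by field_simp
end

section
/- Let A be a Boolean algebra whose Stone space K_A is an almost P-space. Let f_n ∈ C(K_A) for each n ∈ ℕ, and suppose that for some x ∈ K_A the series Σ_{n∈ℕ} f_n(x) converges with sum strictly greater than δ for some δ ∈ ℝ. Then there exists a nonzero a ∈ A such that for every y in the clopen set [a], the series Σ_{n∈ℕ} f_n(y) converges with sum strictly greater than δ. -/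
open TopologicalSpace Filter

/-- Let `A` be a Boolean algebra whose Stone space is an almost P-space; via Stone duality we
represent `A` as the algebra of clopen subsets of a totally disconnected compact Hausdorff
space `K`. If `f_n ∈ C(K)` and at some point `x` the series `Σ_n f_n(x)` converges to a sum
`> δ`, then there is a nonzero clopen `a` such that for every `y ∈ [a]` the series
`Σ_n f_n(y)` converges to a sum `> δ`. -/
theorem exists_clopen_sum_gt
    (K : Type*) [TopologicalSpace K] [CompactSpace K] [T2Space K]
    [TotallyDisconnectedSpace K]
    (hP : ∀ G : Set K, IsGδ G → G.Nonempty → (interior G).Nonempty)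
    (f : ℕ → C(K, ℝ)) (δ : ℝ) (x : K) (s : ℝ)
    (hconv : Tendsto (fun N => ∑ n ∈ Finset.range N, f n x) atTop (nhds s))
    (hgt : s > δ) :
    ∃ a : Clopens K, a ≠ ⊥ ∧ ∀ y ∈ a, ∃ t : ℝ,
      Tendsto (fun N => ∑ n ∈ Finset.range N, f n y) atTop (nhds t) ∧ t > δ := by
  set S : ℕ → K → ℝ := fun n y => ∑ i ∈ Finset.range n, f i y with hS
  have hScont : ∀ n, Continuous (S n) := fun n =>
    continuous_finset_sum _ fun i _ => (f i).continuous
  set ε : ℝ := (s - δ) / 2 with hεdef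
  have hε : 0 < ε := by simp [hεdef]; linarith
  set c : ℕ → ℝ := fun k => min (ε / 2) (1 / (k + 1)) with hcdef
  have hc : ∀ k, 0 < c k := fun k => lt_min (by linarith) (by positivity)
  have hcε : ∀ k, c k ≤ ε / 2 := fun k => min_le_left _ _
  have hck : ∀ k : ℕ, c k ≤ 1 / (k + 1) := fun k => min_le_right _ _
  have hx_cauchy : CauchySeq (fun n => S n x) := hconv.cauchySeq
  have hN' : ∀ k : ℕ, ∃ N, ∀ n ≥ N, dist (S n x) (S N x) < c k := fun k =>
    Metric.cauchySeq_iff'.mp hx_cauchy (c k) (hc k)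
  choose N hN using hN'
  -- x satisfies S (N 0) x > δ + ε
  have hdist0 : dist s (S (N 0) x) ≤ c 0 := by
    refine le_of_tendsto ((hconv.dist tendsto_const_nhds)) ?_
    filter_upwards [eventually_ge_atTop (N 0)] with n hn
    exact (hN 0 n hn).le
  have hxN0 : δ + ε < S (N 0) x := by
    have h1 : |s - S (N 0) x| ≤ ε / 2 := by
      rw [← Real.dist_eq]; exact hdist0.trans (hcε 0)
    have := abs_le.mp h1
    have hs : s = δ + 2 * ε := by rw [hεdef]; ring
    linarith [this.2]
  set G : Set K :=
    {y | δ + ε < S (N 0) y} ∩ ⋂ k, ⋂ m, {y | dist (S (N k + m) y) (S (N k) y) < c k}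
    with hGdef
  have hGδ : IsGδ G := by
    refine IsGδ.inter ((isOpen_lt continuous_const (hScont _)).isGδ) ?_
    refine .iInter fun k => .iInter fun m => IsOpen.isGδ ?_
    exact isOpen_lt (Continuous.dist (hScont _) (hScont _)) continuous_const
  have hxG : x ∈ G := by
    refine ⟨hxN0, Set.mem_iInter.2 fun k => Set.mem_iInter.2 fun m => ?_⟩
    exact hN k (N k + m) (Nat.le_add_right _ _)
  obtain ⟨z, hz⟩ := hP G hGδ ⟨x, hxG⟩
  obtain ⟨V, hV, hzV, hVsub⟩ := compact_exists_isClopen_in_isOpen isOpen_interior hz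
  have hVG : V ⊆ G := hVsub.trans interior_subset
  refine ⟨⟨V, hV⟩, ?_, ?_⟩
  · intro h
    have : z ∈ (⊥ : Clopens K) := h ▸ hzV
    exact this
  · intro y hy
    obtain ⟨hy1, hy2⟩ := hVG hy
    simp only [Set.mem_setOf_eq] at hy1
    have hy2' : ∀ k n, N k ≤ n → dist (S n y) (S (N k) y) < c k := by
      intro k n hn
      have := Set.mem_iInter.1 (Set.mem_iInter.1 hy2 k) (n - N k)
      rwa [Nat.add_sub_cancel' hn] at this
    have hy_cauchy : CauchySeq (fun n => S n y) := by
      rw [Metric.cauchySeq_iff]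
      intro ε' hε'
      obtain ⟨k, hk⟩ := exists_nat_gt (2 / ε')
      refine ⟨N k, fun m hm n hn => ?_⟩
      have h1 := hy2' k m hm
      have h2 := hy2' k n hn
      have h3 : c k < ε' / 2 := by
        refine (hck k).trans_lt ?_
        rw [div_lt_div_iff₀ (by positivity) (by positivity)] at *
        have : 2 / ε' < k + 1 := hk.trans_le (by simp)
        rw [div_lt_iff₀ hε'] at this
        linarith
      calc dist (S m y) (S n y) ≤ dist (S m y) (S (N k) y) + dist (S (N k) y) (S n y) :=
            dist_triangle _ _ _
        _ < c k + c k := by rw [dist_comm (S (N k) y)]; linarith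
        _ < ε' := by linarith
    obtain ⟨t, ht⟩ := cauchySeq_tendsto_of_complete hy_cauchy
    refine ⟨t, ht, ?_⟩
    have hlb : S (N 0) y - ε / 2 ≤ t := by
      refine le_of_tendsto_of_tendsto tendsto_const_nhds ht ?_
      filter_upwards [eventually_ge_atTop (N 0)] with n hn
      have := hy2' 0 n hn
      have h1 : |S n y - S (N 0) y| ≤ ε / 2 := by
        rw [← Real.dist_eq]; exact this.le.trans (hcε 0)
      have := abs_le.mp h1
      linarith [this.1]
    linarith
end

section
/- Let Â ⊆ B̂ be Boolean algebras with |Â| < 𝔠 ≤ |B̂| (𝔠 being the cardinality of the continuum), let φ : P(ℕ) → B̂ be a submorphism from the power set algebra of ℕ such that φ({n}) ∈ Â for every n ∈ ℕ, let I be an index set with |I| < 𝔠, and suppose that for every i ∈ I, X_i, Y_i ⊆ Â are orthogonal subsets which are not separated in Â. Then there exists an infinite set τ ⊆ ℕ such that for every υ ⊆ τ and every i ∈ I, the sets X_i and Y_i remain not separated in the subalgebra Â⟨φ(υ)⟩ of B̂ generated by Â together with φ(υ). -/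
open Cardinal

/-!
Suppose every branch `τ_f` (`f : ℕ → Bool`) of the binary tree, coded into `ℕ`, had a subset
`υ_f` such that some pair `(X_i, Y_i)` becomes separated in `Â⟨φ(υ_f)⟩`. A separator there has
the form `(a ⊓ u) ⊔ (b ⊓ uᶜ)` with `a, b ∈ Â` and `u = φ(υ_f)`, so `a` separates the pair below
`u` and `b` separates it below `uᶜ`. There are `𝔠` branches but fewer than `𝔠` triples
`(i, a, b)`, so two distinct branches `f ≠ g` share one. As the branches are almost disjoint,
`w = φ(υ_f ∩ υ_g) = φ(υ_f) ⊓ φ(υ_g)` lies in `Â`; `a` separates the pair below `w` and `b`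
below `wᶜ = φ(υ_f)ᶜ ⊔ φ(υ_g)ᶜ`, so `(a ⊓ w) ⊔ (b ⊓ wᶜ) ∈ Â` separates it, a contradiction.
-/

/-- A subset of a Boolean algebra which is a subalgebra: it contains `⊥` and `⊤` and is
closed under `⊔`, `⊓` and complementation. -/
def IsBASubalgebra {B : Type*} [BooleanAlgebra B] (A : Set B) : Prop :=
  ⊥ ∈ A ∧ ⊤ ∈ A ∧ (∀ x ∈ A, ∀ y ∈ A, x ⊔ y ∈ A) ∧ (∀ x ∈ A, ∀ y ∈ A, x ⊓ y ∈ A) ∧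
    ∀ x ∈ A, xᶜ ∈ A

/-- Membership in the subalgebra of `B` generated by a set `S`. -/
inductive BAGen {B : Type*} [BooleanAlgebra B] (S : Set B) : B → Prop
  | of {a : B} : a ∈ S → BAGen S a
  | bot : BAGen S ⊥
  | top : BAGen S ⊤
  | sup {a b : B} : BAGen S a → BAGen S b → BAGen S (a ⊔ b)
  | inf {a b : B} : BAGen S a → BAGen S b → BAGen S (a ⊓ b)
  | compl {a : B} : BAGen S a → BAGen S aᶜ

/-- Two subsets `X`, `Y` of a Boolean algebra `B` are separated inside a subset `A ⊆ B` if
some `c ∈ A` satisfies `x ≤ c` for all `x ∈ X` and `y ⊓ c = ⊥` for all `y ∈ Y`. -/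
def SeparatedIn {B : Type*} [BooleanAlgebra B] (A : Set B) (X Y : Set B) : Prop :=
  ∃ c ∈ A, (∀ x ∈ X, x ≤ c) ∧ ∀ y ∈ Y, y ⊓ c = ⊥

section SeparatesOn

variable {B : Type*} [BooleanAlgebra B]

def SeparatesOn (c u : B) (X Y : Set B) : Prop :=
  (∀ x ∈ X, x ⊓ u ≤ c ⊓ u) ∧ ∀ y ∈ Y, Disjoint y (c ⊓ u)

variable {X Y : Set B} {a b c u v : B}

lemma SeparatesOn.of_separatedBy (hX : ∀ x ∈ X, x ≤ c) (hY : ∀ y ∈ Y, y ⊓ c = ⊥) (u : B) :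
    SeparatesOn c u X Y :=
  ⟨fun x hx => inf_le_inf_right u (hX x hx),
    fun y hy => (disjoint_iff.mpr (hY y hy)).mono_right inf_le_left⟩

lemma SeparatesOn.mono (h : SeparatesOn c u X Y) (hvu : v ≤ u) : SeparatesOn c v X Y :=
  ⟨fun x hx => le_inf ((inf_le_inf_left x hvu).trans ((h.1 x hx).trans inf_le_left)) inf_le_right,
    fun y hy => (h.2 y hy).mono_right (inf_le_inf_left c hvu)⟩

lemma SeparatesOn.sup (hu : SeparatesOn c u X Y) (hv : SeparatesOn c v X Y) :
    SeparatesOn c (u ⊔ v) X Y := by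
  refine ⟨fun x hx => ?_, fun y hy => ?_⟩
  · rw [inf_sup_left, inf_sup_left]
    exact sup_le_sup (hu.1 x hx) (hv.1 x hx)
  · rw [inf_sup_left]
    exact (hu.2 y hy).sup_right (hv.2 y hy)

lemma separatedIn_of_separatesOn {A : Set B} (hA : IsBASubalgebra A) (ha : a ∈ A) (hb : b ∈ A)
    (hu : u ∈ A) (hau : SeparatesOn a u X Y) (hbu : SeparatesOn b uᶜ X Y) :
    SeparatedIn A X Y := by
  obtain ⟨-, -, hsup, hinf, hcompl⟩ := hA
  refine ⟨a ⊓ u ⊔ b ⊓ uᶜ, hsup _ (hinf _ ha _ hu) _ (hinf _ hb _ (hcompl _ hu)),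
    fun x hx => ?_, fun y hy => ?_⟩
  · calc x = x ⊓ u ⊔ x ⊓ uᶜ := by rw [← inf_sup_left, sup_compl_eq_top, inf_top_eq]
      _ ≤ a ⊓ u ⊔ b ⊓ uᶜ := sup_le_sup (hau.1 x hx) (hbu.1 x hx)
  · exact disjoint_iff.mp ((hau.2 y hy).sup_right (hbu.2 y hy))

/-- The elements agreeing below `v` with an element of `A` form a subalgebra. -/
lemma exists_inf_eq_of_bagen {A S : Set B} (hA : IsBASubalgebra A)
    (hS : ∀ s ∈ S, ∃ a ∈ A, s ⊓ v = a ⊓ v) (hc : BAGen S c) : ∃ a ∈ A, c ⊓ v = a ⊓ v := by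
  obtain ⟨hbot, htop, hsup, hinf, hcompl⟩ := hA
  induction hc with
  | of hs => exact hS _ hs
  | bot => exact ⟨⊥, hbot, rfl⟩
  | top => exact ⟨⊤, htop, rfl⟩
  | sup _ _ ih₁ ih₂ =>
    obtain ⟨a₁, ha₁, h₁⟩ := ih₁
    obtain ⟨a₂, ha₂, h₂⟩ := ih₂
    exact ⟨a₁ ⊔ a₂, hsup _ ha₁ _ ha₂, by rw [inf_sup_right, inf_sup_right, h₁, h₂]⟩
  | inf _ _ ih₁ ih₂ =>
    obtain ⟨a₁, ha₁, h₁⟩ := ih₁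
    obtain ⟨a₂, ha₂, h₂⟩ := ih₂
    exact ⟨a₁ ⊓ a₂, hinf _ ha₁ _ ha₂,
      by rw [inf_inf_distrib_right, h₁, h₂, ← inf_inf_distrib_right]⟩
  | compl _ ih =>
    obtain ⟨a, ha, h⟩ := ih
    have compl_inf_eq (d : B) : dᶜ ⊓ v = (d ⊓ v)ᶜ ⊓ v := by simp [compl_inf, inf_sup_right]
    exact ⟨aᶜ, hcompl _ ha, by rw [compl_inf_eq, h, ← compl_inf_eq]⟩

lemma exists_separatesOn_of_separatedIn_adjoin {A : Set B} (hA : IsBASubalgebra A)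
    (h : SeparatedIn {c : B | BAGen (A ∪ {u}) c} X Y) :
    ∃ a ∈ A, ∃ b ∈ A, SeparatesOn a u X Y ∧ SeparatesOn b uᶜ X Y := by
  obtain ⟨c, hc, hX, hY⟩ := h
  have restrict (v : B) (hv : ∃ a ∈ A, u ⊓ v = a ⊓ v) : ∃ a ∈ A, c ⊓ v = a ⊓ v :=
    exists_inf_eq_of_bagen hA (by rintro s (hs | rfl); exacts [⟨s, hs, rfl⟩, hv]) hc
  obtain ⟨a, ha, hca⟩ := restrict u ⟨⊤, hA.2.1, by simp⟩
  obtain ⟨b, hb, hcb⟩ := restrict uᶜ ⟨⊥, hA.1, by simp⟩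
  have hsep := SeparatesOn.of_separatedBy hX hY
  refine ⟨a, ha, b, hb, ?_, ?_⟩
  · rw [SeparatesOn, ← hca]
    exact hsep u
  · rw [SeparatesOn, ← hcb]
    exact hsep uᶜ

end SeparatesOn

section Branches

def prefixCode (f : ℕ → Bool) (n : ℕ) : ℕ := Encodable.encode ((List.range n).map f)

def branch (f : ℕ → Bool) : Set ℕ := Set.range (prefixCode f)

lemma prefixCode_eq_prefixCode {f g : ℕ → Bool} {m n : ℕ}
    (h : prefixCode f m = prefixCode g n) : m = n ∧ ∀ k < m, f k = g k := by
  have hlist := Encodable.encode_injective h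
  have hmn : m = n := by simpa using congrArg List.length hlist
  subst hmn
  simpa using List.map_inj_left.mp hlist

lemma branch_infinite (f : ℕ → Bool) : (branch f).Infinite :=
  Set.infinite_range_of_injective fun _ _ h => (prefixCode_eq_prefixCode h).1

lemma branch_inter_branch_finite {f g : ℕ → Bool} (hfg : f ≠ g) :
    (branch f ∩ branch g).Finite := by
  obtain ⟨k, hk⟩ := Function.ne_iff.mp hfg
  refine ((Set.finite_le_nat k).image (prefixCode f)).subset ?_
  rintro _ ⟨⟨n, rfl⟩, ⟨m, hm⟩⟩
  refine ⟨n, show n ≤ k from not_lt.mp fun hkn => hk ?_, rfl⟩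
  exact (prefixCode_eq_prefixCode hm.symm).2 k hkn

end Branches

lemma mk_prod_lt_continuum {α β : Type*} (hα : #α < 𝔠) (hβ : #β < 𝔠) : #(α × β) < 𝔠 := by
  rw [mk_prod]
  exact mul_lt_of_lt aleph0_le_continuum (lift_lt_continuum.mpr hα) (lift_lt_continuum.mpr hβ)

lemma exists_ne_map_eq_of_mk_lt_continuum {β : Type*} (hβ : #β < 𝔠) (F : (ℕ → Bool) → β) :
    ∃ f g, f ≠ g ∧ F f = F g := by
  by_contra! hF
  have hle := lift_mk_le_lift_mk_of_injective fun f g h => by_contra fun hne => hF f g hne h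
  have hcont : #(ℕ → Bool) = 𝔠 := by simp
  rw [hcont, lift_continuum] at hle
  exact hle.not_gt (lift_lt_continuum.mpr hβ)

lemma map_mem_of_finite {α B : Type*} [BooleanAlgebra B] {A : Set B} (hA : IsBASubalgebra A)
    {φ : Set α → B} (hφbot : φ ∅ = ⊥) (hφsup : ∀ s t, φ (s ∪ t) = φ s ⊔ φ t)
    (hφA : ∀ n, φ {n} ∈ A) {s : Set α} (hs : s.Finite) : φ s ∈ A := by
  induction s, hs using Set.Finite.induction_on with
  | empty => exact hφbot ▸ hA.1
  | @insert n t _ _ ih =>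
    rw [Set.insert_eq, hφsup]
    exact hA.2.2.1 _ (hφA n) _ ih

theorem keep_nonseparated_general
    (B : Type*) [BooleanAlgebra B] (A : Set B) (hA : IsBASubalgebra A)
    (hcardA : #A < 𝔠)
    (φ : Set ℕ → B)
    (hφbot : φ ∅ = ⊥)
    (hφinf : ∀ s t : Set ℕ, φ (s ∩ t) = φ s ⊓ φ t)
    (hφsup : ∀ s t : Set ℕ, φ (s ∪ t) = φ s ⊔ φ t)
    (hφA : ∀ n : ℕ, φ {n} ∈ A)
    (I : Type*) (hcardI : #I < 𝔠)
    (X Y : I → Set B)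
    (hnonsep : ∀ i, ¬ SeparatedIn A (X i) (Y i)) :
    ∃ τ : Set ℕ, τ.Infinite ∧ ∀ υ ⊆ τ, ∀ i,
      ¬ SeparatedIn {b : B | BAGen (A ∪ {φ υ}) b} (X i) (Y i) := by
  by_contra! hsep
  have hbranch (f : ℕ → Bool) : ∃ υ ⊆ branch f, ∃ i, ∃ a ∈ A, ∃ b ∈ A,
      SeparatesOn a (φ υ) (X i) (Y i) ∧ SeparatesOn b (φ υ)ᶜ (X i) (Y i) := by
    obtain ⟨υ, hυ, i, hi⟩ := hsep (branch f) (branch_infinite f)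
    exact ⟨υ, hυ, i, exists_separatesOn_of_separatedIn_adjoin hA hi⟩
  choose υ hυ i a ha b hb hsa hsb using hbranch
  obtain ⟨f, g, hfg, hsame⟩ := exists_ne_map_eq_of_mk_lt_continuum
    (mk_prod_lt_continuum hcardI (mk_prod_lt_continuum hcardA hcardA))
    fun f => (i f, (⟨a f, ha f⟩ : A), (⟨b f, hb f⟩ : A))
  simp only [Prod.mk.injEq, Subtype.mk.injEq] at hsame
  obtain ⟨hi, -, hbeq⟩ := hsame
  have hfin : (υ f ∩ υ g).Finite :=
    (branch_inter_branch_finite hfg).subset (Set.inter_subset_inter (hυ f) (hυ g))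
  refine hnonsep (i f) (separatedIn_of_separatesOn hA (ha f) (hb f)
    (map_mem_of_finite hA hφbot hφsup hφA hfin) ?_ ?_)
  · exact hφinf _ _ ▸ (hsa f).mono inf_le_left
  · rw [hφinf, compl_inf]
    exact (hsb f).sup (by rw [hi, hbeq]; exact hsb g)

/-- Let `Â ⊆ B̂` be Boolean algebras with `|Â| < 𝔠 ≤ |B̂|`, let `φ : P(ℕ) → B̂` be a
submorphism with `φ {n} ∈ Â` for all `n`, and let `(X_i, Y_i)`, `i ∈ I`, `|I| < 𝔠`, be pairs
of orthogonal subsets of `Â` which are not separated in `Â`. Then there is an infinite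
`τ ⊆ ℕ` such that for every `υ ⊆ τ` and every `i ∈ I` the sets `X_i`, `Y_i` remain not
separated in the subalgebra `Â⟨φ(υ)⟩` generated by `Â ∪ {φ(υ)}`. -/
theorem keep_nonseparated
    (B : Type*) [BooleanAlgebra B] (A : Set B) (hA : IsBASubalgebra A)
    (hcardA : #A < 𝔠) (hcardB : 𝔠 ≤ #B)
    (φ : Set ℕ → B)
    (hφbot : φ ∅ = ⊥)
    (hφinf : ∀ s t : Set ℕ, φ (s ∩ t) = φ s ⊓ φ t)
    (hφsup : ∀ s t : Set ℕ, φ (s ∪ t) = φ s ⊔ φ t)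
    (hφA : ∀ n : ℕ, φ {n} ∈ A)
    (I : Type*) (hcardI : #I < 𝔠)
    (X Y : I → Set B) (hX : ∀ i, X i ⊆ A) (hY : ∀ i, Y i ⊆ A)
    (horth : ∀ i, ∀ x ∈ X i, ∀ y ∈ Y i, x ⊓ y = ⊥)
    (hnonsep : ∀ i, ¬ SeparatedIn A (X i) (Y i)) :
    ∃ τ : Set ℕ, τ.Infinite ∧ ∀ υ ⊆ τ, ∀ i,
      ¬ SeparatedIn {b : B | BAGen (A ∪ {φ υ}) b} (X i) (Y i) :=
  keep_nonseparated_general B A hA hcardA φ hφbot hφinf hφsup hφA I hcardI X Y hnonsep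
end

section
/- Let K be an infinite compact Hausdorff totally disconnected space such that every injective bounded linear operator on C(K) is surjective, and let L be a nonempty proper clopen subset of K. Then the Banach space C(L) is not isomorphic to C(K) (there is no bijective bounded linear operator from C(K) onto C(L)). -/
/-!
Extension by zero is a bounded linear injection of `C(L)` into `C(K)` whose range consists of
functions vanishing off `L`. An isomorphism `T : C(K) → C(L)` followed by it would therefore be an
injective operator on `C(K)` that misses the nonzero constants, since `L ≠ K`.
-/

open Function Set

namespace ContinuousMap

variable {X E : Type*} [TopologicalSpace X] {s : Set X} [TopologicalSpace E]

section Zero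

variable [Zero E]

open scoped Classical in
noncomputable def extendByZero (hs : IsClopen s) (g : C(s, E)) : C(X, E) where
  toFun x := if h : x ∈ s then g ⟨x, h⟩ else 0
  continuous_toFun := by
    refine continuous_iff_continuousAt.2 fun x => ?_
    by_cases hx : x ∈ s
    · lift x to s using hx
      refine hs.isOpen.isOpenEmbedding_subtypeVal.continuousAt_iff.1 ?_
      simpa [Function.comp_def] using g.continuous.continuousAt
    · refine (continuousAt_const (y := (0 : E))).congr ?_
      filter_upwards [hs.compl.isOpen.mem_nhds hx] with y hy
      rw [dif_neg hy]

theorem extendByZero_apply_of_mem (hs : IsClopen s) (g : C(s, E)) (x : s) :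
    extendByZero hs g x = g x :=
  dif_pos x.2

theorem extendByZero_apply_of_notMem (hs : IsClopen s) (g : C(s, E)) {x : X} (hx : x ∉ s) :
    extendByZero hs g x = 0 :=
  dif_neg hx

theorem extendByZero_injective (hs : IsClopen s) : Injective (extendByZero (E := E) hs) :=
  fun g h hgh => ext fun x => by
    simpa only [extendByZero_apply_of_mem] using DFunLike.congr_fun hgh (x : X)

theorem extendByZero_not_surjective [Nontrivial E] (hs : IsClopen s) (hs' : s ≠ univ) :
    ¬ Surjective (extendByZero (E := E) hs) := by
  obtain ⟨x, hx⟩ := (ne_univ_iff_exists_notMem s).1 hs'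
  obtain ⟨e, he⟩ := exists_ne (0 : E)
  intro hsurj
  obtain ⟨g, hg⟩ := hsurj (const X e)
  exact he ((DFunLike.congr_fun hg x).symm.trans (extendByZero_apply_of_notMem hs g hx))

end Zero

variable (𝕜 : Type*) [NormedField 𝕜] {F : Type*} [NormedAddCommGroup F] [NormedSpace 𝕜 F]
  [CompactSpace X] [CompactSpace s]

noncomputable def extendByZeroCLM (hs : IsClopen s) : C(s, F) →L[𝕜] C(X, F) :=
  LinearMap.mkContinuous
    { toFun := extendByZero hs
      map_add' g h := ext fun x => by
        by_cases hx : x ∈ s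
        · simp [extendByZero_apply_of_mem hs _ ⟨x, hx⟩]
        · simp [extendByZero_apply_of_notMem hs _ hx]
      map_smul' c g := ext fun x => by
        by_cases hx : x ∈ s
        · simp [extendByZero_apply_of_mem hs _ ⟨x, hx⟩]
        · simp [extendByZero_apply_of_notMem hs _ hx] }
    1 fun g => by
      rw [one_mul, norm_le _ (norm_nonneg g)]
      intro x
      by_cases hx : x ∈ s
      · simpa [extendByZero_apply_of_mem hs _ ⟨x, hx⟩] using g.norm_coe_le_norm ⟨x, hx⟩
      · simp [extendByZero_apply_of_notMem hs _ hx]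

end ContinuousMap

theorem CL_not_isomorphic_CK_general
    (K : Type*) [TopologicalSpace K] [CompactSpace K]
    (hfew : ∀ T : C(K, ℝ) →L[ℝ] C(K, ℝ), Function.Injective T → Function.Surjective T)
    (L : Set K) (hL : IsClopen L) (hproper : L ≠ Set.univ) :
    haveI : CompactSpace L := isCompact_iff_compactSpace.mp (hL.isClosed.isCompact)
    ¬ ∃ T : C(K, ℝ) →L[ℝ] C(L, ℝ), Function.Bijective T := by
  have : CompactSpace L := isCompact_iff_compactSpace.mp hL.isClosed.isCompact
  rintro ⟨T, hT⟩
  let E : C(L, ℝ) →L[ℝ] C(K, ℝ) := ContinuousMap.extendByZeroCLM ℝ hL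
  have hinj : Injective (E.comp T) := (ContinuousMap.extendByZero_injective hL).comp hT.injective
  exact ContinuousMap.extendByZero_not_surjective hL hproper
    ((hfew _ hinj).of_comp (f := ContinuousMap.extendByZero hL))

/-- Let `K` be an infinite totally disconnected compact Hausdorff space such that every
injective bounded linear operator on `C(K)` is surjective, and let `L` be a nonempty proper
clopen subset of `K`. Then `C(L)` is not isomorphic to `C(K)`: there is no bijective
bounded linear operator from `C(K)` onto `C(L)`. -/
theorem CL_not_isomorphic_CK
    (K : Type*) [TopologicalSpace K] [CompactSpace K] [T2Space K] [Infinite K]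
    [TotallyDisconnectedSpace K]
    (hfew : ∀ T : C(K, ℝ) →L[ℝ] C(K, ℝ), Function.Injective T → Function.Surjective T)
    (L : Set K) (hL : IsClopen L) (hne : L.Nonempty) (hproper : L ≠ Set.univ) :
    haveI : CompactSpace L := isCompact_iff_compactSpace.mp (hL.isClosed.isCompact)
    ¬ ∃ T : C(K, ℝ) →L[ℝ] C(L, ℝ), Function.Bijective T :=
  CL_not_isomorphic_CK_general K hfew L hL hproper
end
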